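/- arXiv:1706.05176 — 5 statements merged into one kernel-verified Lean document; each statement's English description precedes it below -/
import Mathlib

section
/- The matrix R(u) = I − (ζ/u)P + (ζ/(u−ζκ))Q satisfies the unitarity relation R(u) R(−u) = (1 − ζ²u⁻²) I and the crossing-type relation R(u) R(u+ζκ)^t = (1 − ζ²u⁻²) I, where t is the partial transpose in one tensor factor. -/
open scoped Matrix Kronecker BigOperators

namespace Yangian

noncomputable def idxSet (n : ℕ) (zero : Bool) : Finset ℤ :=
  if zero then Finset.Icc (-(n : ℤ)) n else (Finset.Icc (-(n : ℤ)) n).erase 0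

abbrev Idx (n : ℕ) (zero : Bool) := {i : ℤ // i ∈ idxSet n zero}

def negIdx {n : ℕ} {zero : Bool} : Idx n zero → Idx n zero :=
  fun ⟨x, hx⟩ => ⟨-x, by
    cases zero with
    | false =>
        simp only [idxSet, Bool.false_eq_true, if_false, Finset.mem_erase,
          Finset.mem_Icc] at hx ⊢
        omega
    | true =>
        simp only [idxSet, if_true, Finset.mem_Icc] at hx ⊢
        omega⟩

noncomputable def theta (sympl : Bool) (i j : ℤ) : ℂ :=
  if sympl then ((i.sign * j.sign : ℤ) : ℂ) else 1

noncomputable def E {n : ℕ} {zero : Bool} (i j : Idx n zero) :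
    Matrix (Idx n zero) (Idx n zero) ℂ :=
  Matrix.single i j 1

noncomputable def F {n : ℕ} {zero : Bool} (sympl : Bool) (i j : Idx n zero) :
    Matrix (Idx n zero) (Idx n zero) ℂ :=
  E i j - theta sympl i.1 j.1 • E (negIdx j) (negIdx i)

noncomputable def Pmat (n : ℕ) (zero : Bool) :
    Matrix (Idx n zero × Idx n zero) (Idx n zero × Idx n zero) ℂ :=
  ∑ i : Idx n zero, ∑ j : Idx n zero, E i j ⊗ₖ E j i

noncomputable def Qmat (n : ℕ) (zero sympl : Bool) :
    Matrix (Idx n zero × Idx n zero) (Idx n zero × Idx n zero) ℂ :=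
  ∑ i : Idx n zero, ∑ j : Idx n zero,
    theta sympl i.1 j.1 • (E i j ⊗ₖ E (negIdx i) (negIdx j))

noncomputable def kappa (n : ℕ) (zero sympl : Bool) : ℂ :=
  ((if zero then 2*n+1 else 2*n : ℕ) : ℂ) / 2 + (if sympl then 1 else -1)

noncomputable def Rmat (n : ℕ) (zero sympl : Bool) (ζ u : ℂ) :
    Matrix (Idx n zero × Idx n zero) (Idx n zero × Idx n zero) ℂ :=
  1 - (ζ / u) • Pmat n zero + (ζ / (u - ζ * kappa n zero sympl)) • Qmat n zero sympl


noncomputable def pt1 {n : ℕ} {zero : Bool} (sympl : Bool)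
    (M : Matrix (Idx n zero × Idx n zero) (Idx n zero × Idx n zero) ℂ) :
    Matrix (Idx n zero × Idx n zero) (Idx n zero × Idx n zero) ℂ :=
  fun p q => theta sympl p.1.1 q.1.1 * M (negIdx q.1, p.2) (negIdx p.1, q.2)

noncomputable def pt2 {n : ℕ} {zero : Bool} (sympl : Bool)
    (M : Matrix (Idx n zero × Idx n zero) (Idx n zero × Idx n zero) ℂ) :
    Matrix (Idx n zero × Idx n zero) (Idx n zero × Idx n zero) ℂ :=
  fun p q => theta sympl p.2.1 q.2.1 * M (p.1, negIdx q.2) (q.1, negIdx p.2)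

lemma negIdx_val {n : ℕ} {zero : Bool} (i : Idx n zero) : (negIdx i).1 = -i.1 := by
  cases i; rfl

lemma negIdx_negIdx {n : ℕ} {zero : Bool} (i : Idx n zero) : negIdx (negIdx i) = i := by
  apply Subtype.ext; simp [negIdx_val]

lemma negIdx_inj {n : ℕ} {zero : Bool} {i j : Idx n zero} (h : negIdx i = negIdx j) :
    i = j := by
  have := congrArg negIdx h; rwa [negIdx_negIdx, negIdx_negIdx] at this

lemma E_apply {n : ℕ} {zero : Bool} (i j a b : Idx n zero) :
    E i j a b = if i = a ∧ j = b then 1 else 0 := by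
  simp [E, Matrix.single]

lemma Pmat_apply {n : ℕ} {zero : Bool} (p q : Idx n zero × Idx n zero) :
    Pmat n zero p q = if p.1 = q.2 ∧ p.2 = q.1 then 1 else 0 := by
  obtain ⟨a, b⟩ := p; obtain ⟨c, d⟩ := q
  simp only [Pmat, Matrix.sum_apply, Matrix.kroneckerMap_apply, E_apply]
  simp [Finset.sum_ite_eq, ite_and, eq_comm]

lemma Qmat_apply {n : ℕ} {zero sympl : Bool} (p q : Idx n zero × Idx n zero) :
    Qmat n zero sympl p q =
      if p.2 = negIdx p.1 ∧ q.2 = negIdx q.1 then theta sympl p.1.1 q.1.1 else 0 := by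
  obtain ⟨a, b⟩ := p; obtain ⟨c, d⟩ := q
  simp only [Qmat, Matrix.sum_apply, Matrix.smul_apply, Matrix.kroneckerMap_apply, E_apply]
  rw [Fintype.sum_eq_single a (by
    intro x hx; apply Finset.sum_eq_zero; intro y _; split_ifs <;> simp_all)]
  rw [Fintype.sum_eq_single c (by intro x hx; split_ifs <;> simp_all)]
  simp [eq_comm, ite_and, mul_ite]



lemma card_Idx_nat (n : ℕ) (zero : Bool) :
    Fintype.card (Idx n zero) = (if zero then 2*n+1 else 2*n : ℕ) := by
  rw [Fintype.card_coe]
  have h0 : (0 : ℤ) ∈ Finset.Icc (-(n:ℤ)) n := by simp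
  have hc : (Finset.Icc (-(n:ℤ)) n).card = 2*n+1 := by
    rw [Int.card_Icc]; omega
  cases zero with
  | true => simpa [idxSet] using hc
  | false =>
    simp only [idxSet, Bool.false_eq_true, if_false, Finset.card_erase_of_mem h0, hc]
    omega

noncomputable def eps (sympl : Bool) : ℂ := if sympl then -1 else 1

lemma sign_sq (x : ℤ) (hx : x ≠ 0) : (x.sign : ℂ) * (x.sign : ℂ) = 1 := by
  cases x with
  | ofNat m => cases m with
    | zero => simp at hx
    | succ k => norm_num [Int.sign]
  | negSucc m => norm_num [Int.sign]

lemma ne_zero_of_mem_false {n : ℕ} (i : Idx n false) : i.1 ≠ 0 := by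
  have := i.2
  simp only [idxSet, Bool.false_eq_true, if_false, Finset.mem_erase] at this
  exact this.1

lemma theta_neg_left (sympl : Bool) (i j : ℤ) :
    theta sympl (-i) j = eps sympl * theta sympl i j := by
  cases sympl <;> simp [theta, eps] <;> push_cast [Int.sign_neg] <;> ring

lemma theta_neg_right (sympl : Bool) (i j : ℤ) :
    theta sympl i (-j) = eps sympl * theta sympl i j := by
  cases sympl <;> simp [theta, eps] <;> push_cast [Int.sign_neg] <;> ring


lemma eps_sq (sympl : Bool) : eps sympl * eps sympl = 1 := by
  cases sympl <;> norm_num [eps]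

lemma negIdx_eq_iff {n : ℕ} {zero : Bool} {i j : Idx n zero} :
    i = negIdx j ↔ j = negIdx i := by
  constructor <;> (intro h; rw [h, negIdx_negIdx])

lemma P_mul_P (n : ℕ) (zero : Bool) : Pmat n zero * Pmat n zero = 1 := by
  ext ⟨a, b⟩ ⟨c, d⟩
  rw [Matrix.mul_apply]
  simp only [Pmat_apply, Fintype.sum_prod_type]
  simp [ite_and, Finset.sum_ite_eq, Matrix.one_apply, Prod.ext_iff, eq_comm, and_comm]

lemma P_mul_Q (n : ℕ) (zero sympl : Bool) :
    Pmat n zero * Qmat n zero sympl = eps sympl • Qmat n zero sympl := by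
  ext ⟨a, b⟩ ⟨c, d⟩
  rw [Matrix.mul_apply]
  simp only [Pmat_apply, Qmat_apply, Matrix.smul_apply, Fintype.sum_prod_type]
  have h1 : ∀ x : Idx n zero, x ≠ b → (∑ y : Idx n zero,
      (if a = y ∧ b = x then 1 else 0) *
      (if y = negIdx x ∧ d = negIdx c then theta sympl x.1 c.1 else 0) : ℂ) = 0 := by
    intro x hx
    apply Finset.sum_eq_zero
    intro y _
    split_ifs <;> simp_all
  rw [Fintype.sum_eq_single b h1]
  have h2 : ∀ y : Idx n zero, y ≠ a → ((if a = y ∧ b = b then 1 else 0) *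
      (if y = negIdx b ∧ d = negIdx c then theta sympl b.1 c.1 else 0) : ℂ) = 0 := by
    intro y hy
    split_ifs <;> simp_all
  rw [Fintype.sum_eq_single a h2]
  rw [if_pos (show a = a ∧ b = b from ⟨rfl, rfl⟩), one_mul]
  by_cases hb : b = negIdx a
  · have ha : a = negIdx b := negIdx_eq_iff.2 hb
    by_cases hd : d = negIdx c
    · rw [if_pos ⟨ha, hd⟩, if_pos ⟨hb, hd⟩, smul_eq_mul]
      rw [show b.1 = -a.1 from by rw [hb, negIdx_val], theta_neg_left]
    · rw [if_neg (fun h => hd h.2), if_neg (fun h => hd h.2), smul_zero]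
  · have ha : a ≠ negIdx b := fun h => hb (negIdx_eq_iff.1 h)
    rw [if_neg (fun h => ha h.1), if_neg (fun h => hb h.1), smul_zero]

lemma Q_mul_P (n : ℕ) (zero sympl : Bool) :
    Qmat n zero sympl * Pmat n zero = eps sympl • Qmat n zero sympl := by
  ext ⟨a, b⟩ ⟨c, d⟩
  rw [Matrix.mul_apply]
  simp only [Pmat_apply, Qmat_apply, Matrix.smul_apply, Fintype.sum_prod_type]
  have h1 : ∀ x : Idx n zero, x ≠ d → (∑ y : Idx n zero,
      (if b = negIdx a ∧ y = negIdx x then theta sympl a.1 x.1 else 0) *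
      (if x = d ∧ y = c then 1 else 0) : ℂ) = 0 := by
    intro x hx
    apply Finset.sum_eq_zero
    intro y _
    split_ifs <;> simp_all
  rw [Fintype.sum_eq_single d h1]
  have h2 : ∀ y : Idx n zero, y ≠ c → ((if b = negIdx a ∧ y = negIdx d then
      theta sympl a.1 d.1 else 0) * (if d = d ∧ y = c then 1 else 0) : ℂ) = 0 := by
    intro y hy
    split_ifs <;> simp_all
  rw [Fintype.sum_eq_single c h2]
  rw [if_pos (show d = d ∧ c = c from ⟨rfl, rfl⟩), mul_one]
  by_cases hd : d = negIdx c
  · have hc : c = negIdx d := negIdx_eq_iff.2 hd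
    by_cases hb : b = negIdx a
    · rw [if_pos ⟨hb, hc⟩, if_pos ⟨hb, hd⟩, smul_eq_mul]
      rw [show d.1 = -c.1 from by rw [hd, negIdx_val], theta_neg_right]
    · rw [if_neg (fun h => hb h.1), if_neg (fun h => hb h.1), smul_zero]
  · have hc : c ≠ negIdx d := fun h => hd (negIdx_eq_iff.1 h)
    rw [if_neg (fun h => hc h.2), if_neg (fun h => hd h.2), smul_zero]

lemma Q_mul_Q (n : ℕ) (zero sympl : Bool) (hs : sympl = true → zero = false) :
    Qmat n zero sympl * Qmat n zero sympl =
      ((if zero then 2*n+1 else 2*n : ℕ) : ℂ) • Qmat n zero sympl := by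
  have hsum : ∀ a c : Idx n zero, ∀ x : Idx n zero,
      theta sympl a.1 x.1 * theta sympl x.1 c.1 = theta sympl a.1 c.1 := by
    intro a c x
    cases sympl with
    | false => simp [theta]
    | true =>
      have hz : zero = false := hs rfl
      subst hz
      simp only [theta, if_true]
      push_cast
      have hx := sign_sq x.1 (ne_zero_of_mem_false x)
      calc (a.1.sign : ℂ) * x.1.sign * ((x.1.sign : ℂ) * c.1.sign)
          = ((x.1.sign : ℂ) * x.1.sign) * ((a.1.sign : ℂ) * c.1.sign) := by ring
        _ = (a.1.sign : ℂ) * c.1.sign := by rw [hx, one_mul]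
  ext ⟨a, b⟩ ⟨c, d⟩
  rw [Matrix.mul_apply]
  simp only [Qmat_apply, Matrix.smul_apply, Fintype.sum_prod_type]
  have key : ∀ x : Idx n zero, (∑ y : Idx n zero,
      (if b = negIdx a ∧ y = negIdx x then theta sympl a.1 x.1 else 0) *
      (if y = negIdx x ∧ d = negIdx c then theta sympl x.1 c.1 else 0) : ℂ) =
      if b = negIdx a ∧ d = negIdx c then theta sympl a.1 c.1 else 0 := by
    intro x
    have hz : ∀ y : Idx n zero, y ≠ negIdx x →
        ((if b = negIdx a ∧ y = negIdx x then theta sympl a.1 x.1 else 0) *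
        (if y = negIdx x ∧ d = negIdx c then theta sympl x.1 c.1 else 0) : ℂ) = 0 := by
      intro y hy
      rw [if_neg (fun h => hy h.2), zero_mul]
    rw [Fintype.sum_eq_single (negIdx x) hz]
    by_cases h : b = negIdx a ∧ d = negIdx c
    · rw [if_pos ⟨h.1, rfl⟩, if_pos ⟨rfl, h.2⟩, hsum a c x, if_pos h]
    · rw [if_neg h]
      rcases not_and_or.mp h with h' | h'
      · rw [if_neg (show ¬(b = negIdx a ∧ negIdx x = negIdx x) from
          fun hh => h' hh.1), zero_mul]
      · rw [if_neg (show ¬(negIdx x = negIdx x ∧ d = negIdx c) from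
          fun hh => h' hh.2), mul_zero]
  rw [Finset.sum_congr rfl (fun x _ => key x), Finset.sum_const, Finset.card_univ,
    card_Idx_nat, nsmul_eq_mul, smul_eq_mul]


lemma pt1_add {n : ℕ} {zero : Bool} (sympl : Bool)
    (M N : Matrix (Idx n zero × Idx n zero) (Idx n zero × Idx n zero) ℂ) :
    pt1 sympl (M + N) = pt1 sympl M + pt1 sympl N := by
  funext p q
  simp [pt1, Matrix.add_apply, mul_add]

lemma pt1_sub {n : ℕ} {zero : Bool} (sympl : Bool)
    (M N : Matrix (Idx n zero × Idx n zero) (Idx n zero × Idx n zero) ℂ) :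
    pt1 sympl (M - N) = pt1 sympl M - pt1 sympl N := by
  funext p q
  simp [pt1, Matrix.sub_apply, mul_sub]

lemma pt1_smul {n : ℕ} {zero : Bool} (sympl : Bool) (c : ℂ)
    (M : Matrix (Idx n zero × Idx n zero) (Idx n zero × Idx n zero) ℂ) :
    pt1 sympl (c • M) = c • pt1 sympl M := by
  funext p q
  simp [pt1, Matrix.smul_apply]
  ring

lemma theta_self {n : ℕ} {zero sympl : Bool} (hs : sympl = true → zero = false)
    (i : Idx n zero) : theta sympl i.1 i.1 = 1 := by
  cases sympl with
  | false => simp [theta]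
  | true =>
    have hz := hs rfl; subst hz
    simp only [theta, if_true]
    push_cast
    exact sign_sq i.1 (ne_zero_of_mem_false i)

lemma theta_mul_symm {n : ℕ} {zero sympl : Bool} (hs : sympl = true → zero = false)
    (i j : Idx n zero) : theta sympl i.1 j.1 * theta sympl j.1 i.1 = 1 := by
  cases sympl with
  | false => simp [theta]
  | true =>
    have hz := hs rfl; subst hz
    simp only [theta, if_true]
    push_cast
    have hi := sign_sq i.1 (ne_zero_of_mem_false i)
    have hj := sign_sq j.1 (ne_zero_of_mem_false j)
    calc (i.1.sign : ℂ) * j.1.sign * ((j.1.sign : ℂ) * i.1.sign)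
        = ((i.1.sign : ℂ) * i.1.sign) * ((j.1.sign : ℂ) * j.1.sign) := by ring
      _ = 1 := by rw [hi, hj, one_mul]

lemma pt1_one {n : ℕ} {zero sympl : Bool} (hs : sympl = true → zero = false) :
    pt1 (n := n) (zero := zero) sympl 1 = 1 := by
  funext ⟨p1, p2⟩ ⟨q1, q2⟩
  simp only [pt1, Matrix.one_apply, Prod.ext_iff]
  by_cases h : p1 = q1
  · subst h
    by_cases h2 : p2 = q2
    · simp [h2, theta_self hs]
    · simp [h2]
  · have : negIdx q1 ≠ negIdx p1 := fun hh => h (negIdx_inj hh).symm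
    simp [h, this]

lemma pt1_P {n : ℕ} {zero : Bool} (sympl : Bool) :
    pt1 sympl (Pmat n zero) = Qmat n zero sympl := by
  funext ⟨p1, p2⟩ ⟨q1, q2⟩
  simp only [pt1, Pmat_apply, Qmat_apply, mul_ite, mul_one, mul_zero]
  exact if_congr ⟨fun ⟨h1, h2⟩ => ⟨h2, h1.symm⟩, fun ⟨h1, h2⟩ => ⟨h2.symm, h1⟩⟩ rfl rfl

lemma pt1_Q {n : ℕ} {zero sympl : Bool} (hs : sympl = true → zero = false) :
    pt1 sympl (Qmat n zero sympl) = Pmat n zero := by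
  funext ⟨p1, p2⟩ ⟨q1, q2⟩
  simp only [pt1, Qmat_apply, Pmat_apply, negIdx_negIdx, mul_ite, mul_zero]
  by_cases h : p2 = q1 ∧ q2 = p1
  · rw [if_pos h, if_pos ⟨h.2.symm, h.1⟩, negIdx_val, negIdx_val, theta_neg_left,
      theta_neg_right]
    calc theta sympl p1.1 q1.1 * (eps sympl * (eps sympl * theta sympl q1.1 p1.1))
        = (eps sympl * eps sympl) * (theta sympl p1.1 q1.1 * theta sympl q1.1 p1.1) := by
          ring
      _ = 1 := by rw [eps_sq, theta_mul_symm hs, one_mul]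
  · rw [if_neg h, if_neg (fun hh => h ⟨hh.2, hh.1.symm⟩)]

lemma combo {I : Type*} [Fintype I] [DecidableEq I] (P Q : Matrix I I ℂ)
    (e Nc a b b' : ℂ) (hPP : P * P = 1) (hPQ : P * Q = e • Q)
    (hQP : Q * P = e • Q) (hQQ : Q * Q = Nc • Q)
    (hco : b + b' + a * e * (b - b') + Nc * (b * b') = 0) :
    (1 - a • P + b • Q) * (1 + a • P + b' • Q) = (1 - a ^ 2) • 1 := by
  have expand : (1 - a • P + b • Q) * (1 + a • P + b' • Q)
      = (1 - a^2) • 1 + (b + b' + a * e * (b - b') + Nc * (b * b')) • Q := by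
    simp only [Matrix.add_mul, Matrix.sub_mul, Matrix.mul_add, Matrix.one_mul,
      Matrix.mul_one, Matrix.smul_mul, Matrix.mul_smul, hPP, hPQ, hQP, hQQ, smul_smul]
    match_scalars <;> ring
  rw [expand, hco, zero_smul, add_zero]

lemma kappa_eq (n : ℕ) (zero sympl : Bool) :
    ((if zero then 2*n+1 else 2*n : ℕ) : ℂ) = 2 * kappa n zero sympl + 2 * eps sympl := by
  cases sympl <;> cases zero <;> simp [kappa, eps] <;> push_cast <;> ring



lemma Rmat_neg (n : ℕ) (zero sympl : Bool) (ζ u : ℂ) :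
    Rmat n zero sympl ζ (-u) = 1 + (ζ / u) • Pmat n zero
      + (-(ζ / (u + ζ * kappa n zero sympl))) • Qmat n zero sympl := by
  unfold Rmat
  have h : -u - ζ * kappa n zero sympl = -(u + ζ * kappa n zero sympl) := by ring
  rw [h, div_neg, div_neg]
  module

lemma pt1_Rmat {n : ℕ} {zero sympl : Bool} (hs : sympl = true → zero = false)
    (ζ v : ℂ) :
    pt1 sympl (Rmat n zero sympl ζ v) = 1
      + (ζ / (v - ζ * kappa n zero sympl)) • Pmat n zero
      + (-(ζ / v)) • Qmat n zero sympl := by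
  unfold Rmat
  rw [pt1_add, pt1_sub, pt1_smul, pt1_smul, pt1_one hs, pt1_P, pt1_Q hs]
  module

/-- unitarity `R(u)R(−u) = (1 − ζ²u⁻²)I` and the crossing-type relation
`R(u) R(u+ζκ)ᵗ¹ = (1 − ζ²u⁻²)I`. -/
theorem statement6 (n : ℕ) (zero sympl : Bool) (hs : sympl = true → zero = false)
    (ζ u : ℂ) (hu : u ≠ 0)
    (h1 : u - ζ * kappa n zero sympl ≠ 0)
    (h2 : u + ζ * kappa n zero sympl ≠ 0)
    (h3 : u ≠ ζ) (h4 : u ≠ -ζ) :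
    Rmat n zero sympl ζ u * Rmat n zero sympl ζ (-u)
        = (1 - ζ ^ 2 * (u⁻¹) ^ 2) • (1 : Matrix (Idx n zero × Idx n zero)
            (Idx n zero × Idx n zero) ℂ) ∧
    Rmat n zero sympl ζ u * pt1 sympl (Rmat n zero sympl ζ (u + ζ * kappa n zero sympl))
        = (1 - ζ ^ 2 * (u⁻¹) ^ 2) • (1 : Matrix (Idx n zero × Idx n zero)
            (Idx n zero × Idx n zero) ℂ) := by
  have hPP := P_mul_P n zero
  have hPQ := P_mul_Q n zero sympl
  have hQP := Q_mul_P n zero sympl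
  have hQQ := Q_mul_Q n zero sympl hs
  set κ := kappa n zero sympl with hκ
  have hco : (ζ / (u - ζ * κ)) + (-(ζ / (u + ζ * κ)))
      + (ζ / u) * eps sympl * ((ζ / (u - ζ * κ)) - (-(ζ / (u + ζ * κ))))
      + ((if zero then 2*n+1 else 2*n : ℕ) : ℂ)
        * ((ζ / (u - ζ * κ)) * (-(ζ / (u + ζ * κ)))) = 0 := by
    rw [kappa_eq n zero sympl, ← hκ]
    field_simp
    ring
  have key := combo (Pmat n zero) (Qmat n zero sympl) (eps sympl)
    ((if zero then 2*n+1 else 2*n : ℕ) : ℂ) (ζ / u) (ζ / (u - ζ * κ))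
    (-(ζ / (u + ζ * κ))) hPP hPQ hQP hQQ hco
  have hsc : ((1 : ℂ) - (ζ / u) ^ 2) = 1 - ζ ^ 2 * (u⁻¹) ^ 2 := by
    rw [div_eq_mul_inv, mul_pow]
  have hfirst : Rmat n zero sympl ζ u * Rmat n zero sympl ζ (-u)
      = (1 - ζ ^ 2 * (u⁻¹) ^ 2) • (1 : Matrix (Idx n zero × Idx n zero)
          (Idx n zero × Idx n zero) ℂ) := by
    rw [Rmat_neg, show Rmat n zero sympl ζ u
      = 1 - (ζ / u) • Pmat n zero + (ζ / (u - ζ * κ)) • Qmat n zero sympl from rfl,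
      key, hsc]
  refine ⟨hfirst, ?_⟩
  rw [pt1_Rmat hs, show u + ζ * κ - ζ * κ = u from by ring,
    show Rmat n zero sympl ζ u
      = 1 - (ζ / u) • Pmat n zero + (ζ / (u - ζ * κ)) • Qmat n zero sympl from rfl]
  rw [show (1 : Matrix (Idx n zero × Idx n zero) (Idx n zero × Idx n zero) ℂ)
      + (ζ / u) • Pmat n zero + (-(ζ / (u + ζ * κ))) • Qmat n zero sympl
      = 1 + (ζ / u) • Pmat n zero + (-(ζ / (u + ζ * κ))) • Qmat n zero sympl from rfl]
  rw [key, hsc]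


end Yangian
end

section
/- In U(sl₂), set v = ½({e,f} − h²), w⁺ = −¼{e,h}, w⁻ = −¼{f,h}, where {a,b}=ab+ba. Then [v, [w⁻, w⁺]] = 0. -/
open scoped BigOperators

namespace Yangian

set_option maxHeartbeats 2000000 in
/-- in `U(sl₂)`, with `v = ½({e,f} − h²)`, `w⁺ = −¼{e,h}`,
`w⁻ = −¼{f,h}`, one has `[v, [w⁻, w⁺]] = 0`. -/
theorem statement9 (A : Type*) [Ring A] [Algebra ℂ A] (e f h : A)
    (he : h * e - e * h = 2 * e) (hf : h * f - f * h = -(2 * f))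
    (hef : e * f - f * e = h) :
    let v : A := (2:ℂ)⁻¹ • (e * f + f * e - h ^ 2)
    let wp : A := -((4:ℂ)⁻¹ • (e * h + h * e))
    let wm : A := -((4:ℂ)⁻¹ • (f * h + h * f))
    v * (wm * wp - wp * wm) - (wm * wp - wp * wm) * v = 0 := by
  intro v wp wm
  have two : (2 : A) = (2:ℂ) • (1:A) := by
    rw [two_smul, ← two_smul ℕ (1:A)]; norm_num
  have r1 : e * f = f * e + h := by linear_combination (norm := noncomm_ring) hef
  have r2 : e * h = h * e - (2:ℂ) • e := by
    rw [two] at he; linear_combination (norm := noncomm_ring) -he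
  have r3 : h * f = f * h - (2:ℂ) • f := by
    rw [two] at hf; linear_combination (norm := noncomm_ring) hf
  have r1' : ∀ x : A, e * (f * x) = f * (e * x) + h * x := by
    intro x; rw [← mul_assoc, r1, add_mul, mul_assoc]
  have r2' : ∀ x : A, e * (h * x) = h * (e * x) - (2:ℂ) • (e * x) := by
    intro x; rw [← mul_assoc, r2, sub_mul, mul_assoc, smul_mul_assoc]
  have r3' : ∀ x : A, h * (f * x) = f * (h * x) - (2:ℂ) • (f * x) := by
    intro x; rw [← mul_assoc, r3, sub_mul, mul_assoc, smul_mul_assoc]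
  show v * (wm * wp - wp * wm) - (wm * wp - wp * wm) * v = 0
  simp only [v, wp, wm, pow_two, smul_mul_assoc, mul_smul_comm, smul_smul,
    neg_mul, mul_neg, smul_sub, smul_add, neg_neg, smul_neg, neg_add, neg_sub,
    mul_add, add_mul, mul_sub, sub_mul, mul_assoc]
  simp only [r1, r2, r3, r1', r2', r3', mul_add, add_mul, mul_sub, sub_mul, mul_assoc,
    smul_add, smul_sub, smul_smul, mul_smul_comm, smul_mul_assoc]
  module

end Yangian
end

section
/- Let g be a semisimple Lie algebra, with Chevalley generators x_i^±, h_i for i ∈ I, and let v_i = ¼ Σ_{α∈Δ⁺} (α, α_i) {x_α⁺, x_α⁻} − ½ h_i², where x_α^± ∈ g_{±α} are normalized so that (x_α⁺, x_α⁻) = 1. Then [h_i, v_j] = 0 in U(g) for all i, j ∈ I. -/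
open scoped BigOperators

namespace Yangian

/-- `[h_i, v_j] = 0` in `U(g)` where
`v_j = ¼ Σ_{α∈Δ⁺} (α,α_j){x_α⁺, x_α⁻} − ½h_j²`.  Stated in an arbitrary associative
`ℂ`-algebra (equivalent by universality of `U(g)`): `h i` are the images of the Cartan
generators, `xp α, xm α` the root vectors for the positive roots `α ∈ Δ⁺`, and
`c α i = (α, α_i)` the pairing values, with the relations these satisfy in `U(g)`. -/
theorem statement12 (A : Type*) [Ring A] [Algebra ℂ A]
    (I Δ : Type*) [Fintype Δ]
    (h : I → A) (xp xm : Δ → A) (c : Δ → I → ℂ)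
    (hcomm : ∀ i j : I, h i * h j = h j * h i)
    (hp : ∀ (α : Δ) (i : I), h i * xp α - xp α * h i = c α i • xp α)
    (hm : ∀ (α : Δ) (i : I), h i * xm α - xm α * h i = -(c α i • xm α)) :
    ∀ i j : I,
      h i * ((4:ℂ)⁻¹ • (∑ α : Δ, c α j • (xp α * xm α + xm α * xp α))
          - (2:ℂ)⁻¹ • (h j) ^ 2)
        - ((4:ℂ)⁻¹ • (∑ α : Δ, c α j • (xp α * xm α + xm α * xp α))
          - (2:ℂ)⁻¹ • (h j) ^ 2) * h i = 0 := by
  intro i j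
  have key : ∀ α : Δ, h i * (xp α * xm α + xm α * xp α)
      = (xp α * xm α + xm α * xp α) * h i := by
    intro α
    have hp' : h i * xp α = xp α * h i + c α i • xp α := eq_add_of_sub_eq' (hp α i)
    have hm' : h i * xm α = xm α * h i - c α i • xm α := by
      have := eq_add_of_sub_eq' (hm α i); rw [← sub_eq_add_neg] at this; exact this
    have k1 : h i * (xp α * xm α) = xp α * xm α * h i := by
      calc h i * (xp α * xm α)
          = (xp α * h i + c α i • xp α) * xm α := by rw [← mul_assoc, hp']
        _ = xp α * (h i * xm α) + c α i • (xp α * xm α) := by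
            rw [add_mul, smul_mul_assoc, mul_assoc]
        _ = xp α * (xm α * h i) - c α i • (xp α * xm α) + c α i • (xp α * xm α) := by
            rw [hm', mul_sub, mul_smul_comm]
        _ = xp α * xm α * h i := by rw [sub_add_cancel, mul_assoc]
    have k2 : h i * (xm α * xp α) = xm α * xp α * h i := by
      calc h i * (xm α * xp α)
          = (xm α * h i - c α i • xm α) * xp α := by rw [← mul_assoc, hm']
        _ = xm α * (h i * xp α) - c α i • (xm α * xp α) := by
            rw [sub_mul, smul_mul_assoc, mul_assoc]
        _ = xm α * (xp α * h i) + c α i • (xm α * xp α) - c α i • (xm α * xp α) := by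
            rw [hp', mul_add, mul_smul_comm]
        _ = xm α * xp α * h i := by rw [add_sub_cancel_right, mul_assoc]
    rw [mul_add, add_mul, k1, k2]
  have hsum : h i * (∑ α : Δ, c α j • (xp α * xm α + xm α * xp α))
      = (∑ α : Δ, c α j • (xp α * xm α + xm α * xp α)) * h i := by
    rw [Finset.mul_sum, Finset.sum_mul]
    refine Finset.sum_congr rfl fun α _ => ?_
    rw [mul_smul_comm, smul_mul_assoc, key α]
  have hsq : h i * (h j) ^ 2 = (h j) ^ 2 * h i := by
    rw [sq, ← mul_assoc, hcomm i j, mul_assoc, hcomm i j, mul_assoc]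
  rw [mul_sub, sub_mul, mul_smul_comm, mul_smul_comm, smul_mul_assoc, smul_mul_assoc,
    hsum, hsq]
  abel

end Yangian
end

section
/- For g = sp_{2n} with simple roots α_0 = −2ε₁, α_i = ε_i − ε_{i+1} (1 ≤ i ≤ n−1) and fundamental weights ω_i = −Σ_{j=i+1}^n ε_j, for any i ∈ {0,…,n−1} and any positive root α, the weight ω_i − α is dominant only if α = −ε_{i+1} − ε_{i+2} (where 0 ≤ i ≤ n−2), in which case ω_i − α = ω_{i+2} (interpreting ω_n as 0). -/
open scoped BigOperators

namespace Yangian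

/-- The coordinate vector `ε_j` (0-indexed). -/
def eps14 (n : ℕ) (j : Fin n) : Fin n → ℤ := fun m => if m = j then 1 else 0

/-- The fundamental weight `ω_i = −Σ_{j=i+1}^n ε_j` of `sp_{2n}` (0-indexed `i`). -/
def spOmega (n : ℕ) (i : Fin n) : Fin n → ℤ := fun j => if i ≤ j then -1 else 0

/-- Positive roots of `sp_{2n}`: `±ε_j − ε_k` for `j < k`, and `−2ε_j`. -/
def spIsPosRoot (n : ℕ) (α : Fin n → ℤ) : Prop :=
  (∃ j k : Fin n, j < k ∧
    (α = eps14 n j - eps14 n k ∨ α = -eps14 n j - eps14 n k)) ∨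
  (∃ j : Fin n, α = -((2 : ℤ) • eps14 n j))

/-- Dominance in this sign convention: integer coordinates with `0 ≥ c₁ ≥ … ≥ c_n`. -/
def spDominant {n : ℕ} (lam : Fin n → ℤ) : Prop :=
  (∀ j, lam j ≤ 0) ∧ ∀ j k : Fin n, j ≤ k → lam k ≤ lam j

/-- for `sp_{2n}`, `ω_i − α` is dominant for a positive root `α` only if
`α = −ε_{i+1} − ε_{i+2}`, in which case `ω_i − α = ω_{i+2}` (with `ω_n = 0`). -/
theorem statement14 (n : ℕ) (i : Fin n) (α : Fin n → ℤ)
    (hα : spIsPosRoot n α) (hdom : spDominant (spOmega n i - α)) :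
    ∃ hlt : (i : ℕ) + 1 < n,
      α = -eps14 n i - eps14 n ⟨(i : ℕ) + 1, hlt⟩ ∧
      spOmega n i - α
        = (if h2 : (i : ℕ) + 2 < n then spOmega n ⟨(i : ℕ) + 2, h2⟩ else 0) := by
  obtain ⟨h1, h2⟩ := hdom
  rcases hα with ⟨j, k, hjk, hc | hc⟩ | ⟨j, hc⟩
  · -- α = ε_j - ε_k : contradiction
    exfalso
    have hk := h1 k
    have hj := h2 j k hjk.le
    subst hc
    simp only [Pi.sub_apply, spOmega, eps14, Fin.le_def] at hk hj
    have hne : (j : ℕ) ≠ (k : ℕ) := Fin.val_ne_of_ne hjk.ne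
    split_ifs at hk hj <;> omega
  · -- α = -ε_j - ε_k
    subst hc
    -- first: i = j
    have hij : i = j := by
      by_contra hne
      have hlt : i < j ∨ j < i := lt_or_gt_of_ne hne
      rcases hlt with hlt | hlt
      · have hj := h1 j
        have hmono := h2 i j hlt.le
        have hi := h1 i
        simp only [Pi.sub_apply, Pi.neg_apply, spOmega, eps14, Fin.le_def, Fin.lt_def] at *
        split_ifs at hj hmono hi <;> omega
      · have hj := h1 j
        simp only [Pi.sub_apply, Pi.neg_apply, spOmega, eps14, Fin.le_def, Fin.lt_def] at *
        split_ifs at hj <;> omega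
    subst hij
    have hkn : (k : ℕ) < n := k.isLt
    have hik : (i : ℕ) < (k : ℕ) := hjk
    have hlt1 : (i : ℕ) + 1 < n := by omega
    -- k = i+1
    have hk1 : (k : ℕ) = (i : ℕ) + 1 := by
      by_contra hne
      set m : Fin n := ⟨(i : ℕ) + 1, hlt1⟩ with hm
      have hmono := h2 m k (by simp [Fin.le_def, hm]; omega)
      have hmk : (m : ℕ) ≠ (k : ℕ) := by simp [hm]; omega
      have hmi : (m : ℕ) ≠ (i : ℕ) := by simp [hm]
      simp only [Pi.sub_apply, Pi.neg_apply, spOmega, eps14, Fin.le_def, Fin.ext_iff, hm] at hmono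
      split_ifs at hmono <;> omega
    have hkeq : k = ⟨(i : ℕ) + 1, hlt1⟩ := Fin.ext hk1
    subst hkeq
    refine ⟨hlt1, rfl, ?_⟩
    funext m
    have hmn := m.isLt
    by_cases h2n : (i : ℕ) + 2 < n
    · rw [dif_pos h2n]
      simp only [Pi.sub_apply, Pi.neg_apply, spOmega, eps14, Fin.le_def, Fin.ext_iff]
      split_ifs <;> omega
    · rw [dif_neg h2n]
      simp only [Pi.sub_apply, Pi.neg_apply, Pi.zero_apply, spOmega, eps14, Fin.le_def,
        Fin.ext_iff]
      split_ifs <;> omega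
  · -- α = -2ε_j : contradiction
    exfalso
    have hj := h1 j
    subst hc
    simp only [Pi.sub_apply, Pi.neg_apply, Pi.smul_apply, spOmega, eps14, Fin.le_def,
      smul_eq_mul] at hj
    split_ifs at hj <;> omega

end Yangian
end

section
/- There exists a unique formal power series h(u) ∈ 1 + u⁻¹ℂ[[u⁻¹]] satisfying h(u)·h(u + ζκ) = (1 − ζ²u⁻²)⁻¹, where the composition h(u+ζκ) means substituting u+ζκ for u and re-expanding in powers of u⁻¹. -/
open scoped BigOperators

namespace Yangian

/-- The substitution `u ↦ u + c` on formal series in `u⁻¹`: if `f = Σ_k a_k u^{-k}`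
then `shift16 c f = Σ_n (Σ_{k ≤ n} a_k (-1)^{n-k} c^{n-k} C(n-1, n-k)) u^{-n}`,
which is the re-expansion of `f(u + c)` in powers of `u⁻¹`. -/
noncomputable def shift16 (c : ℂ) (f : PowerSeries ℂ) : PowerSeries ℂ :=
  PowerSeries.mk fun n => ∑ k ∈ Finset.range (n + 1),
    (PowerSeries.coeff k f) * ((-1) ^ (n - k) * c ^ (n - k) *
      ((n - 1).choose (n - k) : ℂ))

/-- Weight in the shift. -/
noncomputable def w16 (c : ℂ) (j k : ℕ) : ℂ :=
  (-1) ^ (j - k) * c ^ (j - k) * ((j - 1).choose (j - k) : ℂ)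

lemma w16_self (c : ℂ) (j : ℕ) : w16 c j j = 1 := by simp [w16]

/-- The part of coefficient `m+1` of `f * shift16 c f` depending only on
coefficients `≤ m`. -/
noncomputable def E16 (c : ℂ) (a : ℕ → ℂ) (m : ℕ) : ℂ :=
  (∑ i ∈ Finset.range m, a (i + 1) *
      ∑ k ∈ Finset.range (m - i + 1), a k * w16 c (m - i) k)
    + ∑ k ∈ Finset.range (m + 1), a k * w16 c (m + 1) k

lemma E16_congr (c : ℂ) {a b : ℕ → ℂ} (m : ℕ) (h : ∀ k ≤ m, a k = b k) :
    E16 c a m = E16 c b m := by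
  unfold E16
  congr 1
  · refine Finset.sum_congr rfl fun i hi => ?_
    rw [Finset.mem_range] at hi
    rw [h (i + 1) (by omega)]
    refine congrArg _ (Finset.sum_congr rfl fun k hk => ?_)
    rw [Finset.mem_range] at hk
    rw [h k (by omega)]
  · refine Finset.sum_congr rfl fun k hk => ?_
    rw [Finset.mem_range] at hk
    rw [h k (by omega)]

/-- The coefficients of the unique solution, defined by strong recursion. -/
noncomputable def a16 (ζ c : ℂ) : ℕ → ℂ
  | 0 => 1
  | (m + 1) =>
    ((if Even (m + 1) then ζ ^ (m + 1) else 0)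
      - ((∑ i ∈ (Finset.range m).attach,
            a16 ζ c ((i : ℕ) + 1) *
              ∑ k ∈ (Finset.range (m - (i : ℕ) + 1)).attach,
                a16 ζ c (k : ℕ) * w16 c (m - (i : ℕ)) (k : ℕ))
        + ∑ k ∈ (Finset.range (m + 1)).attach,
            a16 ζ c (k : ℕ) * w16 c (m + 1) (k : ℕ))) / 2
  decreasing_by
  · have := i.2; rw [Finset.mem_range] at this; omega
  · have h1 := i.2; have h2 := k.2
    rw [Finset.mem_range] at h1 h2; omega
  · have := k.2; rw [Finset.mem_range] at this; omega

lemma a16_zero (ζ c : ℂ) : a16 ζ c 0 = 1 := by rw [a16]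

lemma a16_succ (ζ c : ℂ) (m : ℕ) :
    a16 ζ c (m + 1)
      = ((if Even (m + 1) then ζ ^ (m + 1) else 0) - E16 c (a16 ζ c) m) / 2 := by
  rw [a16]
  unfold E16
  congr 3
  · refine (Finset.sum_congr rfl fun i _ => ?_).trans
      (Finset.sum_attach (Finset.range m)
        (fun i => a16 ζ c (i + 1) * ∑ k ∈ Finset.range (m - i + 1),
          a16 ζ c k * w16 c (m - i) k))
    rw [Finset.sum_attach (Finset.range (m - (i : ℕ) + 1))
      (fun k => a16 ζ c k * w16 c (m - (i : ℕ)) k)]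
  · exact Finset.sum_attach (Finset.range (m + 1))
      (fun k => a16 ζ c k * w16 c (m + 1) k)

lemma coeff_mul_shift16 (c : ℂ) (f : PowerSeries ℂ) (n : ℕ) :
    PowerSeries.coeff n (f * shift16 c f)
      = ∑ i ∈ Finset.range (n + 1), PowerSeries.coeff i f *
          ∑ k ∈ Finset.range (n - i + 1),
            PowerSeries.coeff k f * w16 c (n - i) k := by
  rw [PowerSeries.coeff_mul, Finset.Nat.sum_antidiagonal_eq_sum_range_succ_mk]
  refine Finset.sum_congr rfl fun i _ => ?_
  simp only [shift16, PowerSeries.coeff_mk, w16]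

/-- Structural lemma: for `a 0 = 1`, the coefficient `m+1` of the product equals
`2 a_{m+1} + E16 c a m`. -/
lemma key16 (c : ℂ) (a : ℕ → ℂ) (ha : a 0 = 1) (m : ℕ) :
    ∑ i ∈ Finset.range (m + 2), a i *
        ∑ k ∈ Finset.range (m + 1 - i + 1), a k * w16 c (m + 1 - i) k
      = 2 * a (m + 1) + E16 c a m := by
  rw [Finset.sum_range_succ, Finset.sum_range_succ']
  have htop : a (m + 1) *
      ∑ k ∈ Finset.range (m + 1 - (m + 1) + 1), a k * w16 c (m + 1 - (m + 1)) k
      = a (m + 1) := by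
    simp [ha, w16_self]
  have hzero : a 0 * ∑ k ∈ Finset.range (m + 1 - 0 + 1), a k * w16 c (m + 1 - 0) k
      = (∑ k ∈ Finset.range (m + 1), a k * w16 c (m + 1) k) + a (m + 1) := by
    simp only [Nat.sub_zero, ha, one_mul, Finset.sum_range_succ, w16_self, mul_one]
  have hmid : ∀ i ∈ Finset.range m,
      a (i + 1) * ∑ k ∈ Finset.range (m + 1 - (i + 1) + 1), a k * w16 c (m + 1 - (i + 1)) k
        = a (i + 1) * ∑ k ∈ Finset.range (m - i + 1), a k * w16 c (m - i) k := by
    intro i _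
    have : m + 1 - (i + 1) = m - i := by omega
    rw [this]
  rw [htop, hzero, Finset.sum_congr rfl hmid, E16]
  ring

lemma coeff_eq (ζ c : ℂ) (a : ℕ → ℂ) (ha0 : a 0 = 1)
    (heq : ∀ m : ℕ,
      a (m + 1) = ((if Even (m + 1) then ζ ^ (m + 1) else 0) - E16 c a m) / 2) :
    PowerSeries.mk a * shift16 c (PowerSeries.mk a)
      = PowerSeries.mk (fun n => if Even n then ζ ^ n else 0) := by
  ext n
  rw [coeff_mul_shift16, PowerSeries.coeff_mk]
  simp only [PowerSeries.coeff_mk]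
  cases n with
  | zero => simp [ha0, w16_self]
  | succ m =>
    rw [key16 c a ha0 m, heq m]
    ring

/-- there is a unique `h(u) ∈ 1 + u⁻¹ℂ[[u⁻¹]]` with
`h(u)h(u+ζκ) = (1 − ζ²u⁻²)⁻¹ = Σ_{k≥0} ζ^{2k} u^{−2k}`. -/
theorem statement16 (ζ κ : ℂ) (hz : ζ ≠ 0) :
    ∃! h : PowerSeries ℂ,
      PowerSeries.constantCoeff h = 1 ∧
      h * shift16 (ζ * κ) h
        = PowerSeries.mk (fun n => if Even n then ζ ^ n else 0) := by
  set c := ζ * κ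
  refine ⟨PowerSeries.mk (a16 ζ c), ⟨?_, ?_⟩, ?_⟩
  · simp [← PowerSeries.coeff_zero_eq_constantCoeff, a16_zero]
  · exact coeff_eq ζ c (a16 ζ c) (a16_zero ζ c) (a16_succ ζ c)
  · rintro h ⟨h0, heq⟩
    have hc : ∀ n, PowerSeries.coeff n h = a16 ζ c n := by
      intro n
      induction n using Nat.strong_induction_on with
      | _ n ih =>
        cases n with
        | zero =>
          rw [a16_zero, PowerSeries.coeff_zero_eq_constantCoeff, h0]
        | succ m =>
          have h0' : PowerSeries.coeff 0 h = 1 := by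
            rw [PowerSeries.coeff_zero_eq_constantCoeff, h0]
          have hkey := congrArg (PowerSeries.coeff (m + 1)) heq
          rw [coeff_mul_shift16, PowerSeries.coeff_mk,
            key16 c (fun k => PowerSeries.coeff k h) h0' m] at hkey
          have hE : E16 c (fun k => PowerSeries.coeff k h) m = E16 c (a16 ζ c) m :=
            E16_congr c m fun k hk => ih k (by omega)
          rw [a16_succ, ← hE]
          linear_combination hkey / 2
    ext n
    rw [hc n, PowerSeries.coeff_mk]

end Yangian
end
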